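/- arXiv:2105.06999 — 2 statements merged into one kernel-verified Lean document; each statement's English description precedes it below -/
import Mathlib

section
/- Let G ≤ A be integrable random variables, K real, and define the adjusted strike K' = K - (E[A] - E[G]). Then the approximate price C̃ = e^{-rT}E[(G - K')^+] satisfies C_G ≤ C̃ ≤ C_G + e^{-rT}(E[A] - E[G]), where C_G = e^{-rT}E[(G-K)^+]. -/
open MeasureTheory

/-! Shifting the strike down by `δ = E[A] - E[G] ≥ 0` raises the payoff `(G - K)^+` pointwise,
and by at most `δ` because `x ↦ x^+` is monotone and 1-Lipschitz; integrate and discount. -/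

theorem max_add_zero_le_max_zero_add (x : ℝ) {δ : ℝ} (hδ : 0 ≤ δ) :
    max (x + δ) 0 ≤ max x 0 + δ :=
  max_le (by linarith [le_max_left x 0]) (by linarith [le_max_right x 0])

section CallPayoff

variable {Ω : Type*} [MeasurableSpace Ω] {P : Measure Ω} {G : Ω → ℝ}

theorem integral_max_sub_zero_anti [IsFiniteMeasure P] (hG : Integrable G P) {K K' : ℝ}
    (hK : K' ≤ K) : ∫ ω, max (G ω - K) 0 ∂P ≤ ∫ ω, max (G ω - K') 0 ∂P :=
  integral_mono (hG.sub (integrable_const K)).pos_part (hG.sub (integrable_const K')).pos_part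
    fun ω => max_le_max (by linarith) le_rfl

theorem integral_max_sub_sub_zero_le [IsProbabilityMeasure P] (hG : Integrable G P) (K : ℝ)
    {δ : ℝ} (hδ : 0 ≤ δ) :
    ∫ ω, max (G ω - (K - δ)) 0 ∂P ≤ (∫ ω, max (G ω - K) 0 ∂P) + δ := by
  have hint : Integrable (fun ω => max (G ω - K) 0) P := (hG.sub (integrable_const K)).pos_part
  calc ∫ ω, max (G ω - (K - δ)) 0 ∂P ≤ ∫ ω, (max (G ω - K) 0 + δ) ∂P :=
        integral_mono (hG.sub (integrable_const (K - δ))).pos_part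
          (hint.add (integrable_const δ)) fun ω => by
            simpa only [sub_sub_eq_add_sub, add_sub_right_comm] using
              max_add_zero_le_max_zero_add (G ω - K) hδ
    _ = (∫ ω, max (G ω - K) 0 ∂P) + δ := by
        rw [integral_add hint (integrable_const δ), integral_const, probReal_univ, one_smul]

end CallPayoff

theorem approximate_price_bounds_general {Ω : Type*} [MeasurableSpace Ω] (P : Measure Ω)
    [IsProbabilityMeasure P] (G A : Ω → ℝ) (hG : Integrable G P) (hA : Integrable A P)
    (hle : ∀ᵐ ω ∂P, G ω ≤ A ω) (K r T : ℝ) :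
    Real.exp (-r * T) * ∫ ω, max (G ω - K) 0 ∂P ≤
        Real.exp (-r * T) *
          ∫ ω, max (G ω - (K - ((∫ ω, A ω ∂P) - ∫ ω, G ω ∂P))) 0 ∂P ∧
      Real.exp (-r * T) *
          (∫ ω, max (G ω - (K - ((∫ ω, A ω ∂P) - ∫ ω, G ω ∂P))) 0 ∂P) ≤
        Real.exp (-r * T) * ∫ ω, max (G ω - K) 0 ∂P +
          Real.exp (-r * T) * ((∫ ω, A ω ∂P) - ∫ ω, G ω ∂P) := by
  have hδ : 0 ≤ (∫ ω, A ω ∂P) - ∫ ω, G ω ∂P := sub_nonneg.2 (integral_mono_ae hG hA hle)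
  have hdisc : 0 ≤ Real.exp (-r * T) := (Real.exp_pos _).le
  refine ⟨mul_le_mul_of_nonneg_left (integral_max_sub_zero_anti hG (sub_le_self K hδ)) hdisc, ?_⟩
  rw [← mul_add]
  exact mul_le_mul_of_nonneg_left (integral_max_sub_sub_zero_le hG K hδ) hdisc

/-- With adjusted strike `K' = K - (E[A] - E[G])`, the approximate price
`C̃ = e^{-rT}E[(G-K')^+]` satisfies `C_G ≤ C̃ ≤ C_G + e^{-rT}(E[A] - E[G])`. -/
theorem approximate_price_bounds {Ω : Type*} [MeasurableSpace Ω] (P : Measure Ω)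
    [IsProbabilityMeasure P] (G A : Ω → ℝ) (hG : Integrable G P) (hA : Integrable A P)
    (hle : ∀ᵐ ω ∂P, G ω ≤ A ω) (K r T : ℝ) (hr : 0 ≤ r) (hT : 0 ≤ T) :
    Real.exp (-r * T) * ∫ ω, max (G ω - K) 0 ∂P ≤
        Real.exp (-r * T) *
          ∫ ω, max (G ω - (K - ((∫ ω, A ω ∂P) - ∫ ω, G ω ∂P))) 0 ∂P ∧
      Real.exp (-r * T) *
          (∫ ω, max (G ω - (K - ((∫ ω, A ω ∂P) - ∫ ω, G ω ∂P))) 0 ∂P) ≤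
        Real.exp (-r * T) * ∫ ω, max (G ω - K) 0 ∂P +
          Real.exp (-r * T) * ((∫ ω, A ω ∂P) - ∫ ω, G ω ∂P) :=
  approximate_price_bounds_general P G A hG hA hle K r T
end

section
/- With G ≤ A integrable, K' = K - (E[A] - E[G]), C̃ = e^{-rT}E[(G-K')^+], and C_A = e^{-rT}E[(A-K)^+], the approximation error satisfies |C̃ - C_A| ≤ e^{-rT}(E[A] - E[G]). -/
open MeasureTheory

/-! The call payoff `x ↦ (x - K)⁺` is nondecreasing and 1-Lipschitz both in the underlying `x`
and in the strike `K`. With `δ = E[A] - E[G] ≥ 0`, lowering the strike by `δ` raises the payoff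
by at most `δ`, and replacing `G` by `A ≥ G` raises it by at most `A - G`, whose mean is again `δ`;
so both `C̃` and `C_A` lie in `[E(G - K)⁺, E(G - K)⁺ + δ]` up to the discount factor. -/

section CallPayoff

variable {Ω : Type*} [MeasurableSpace Ω] {P : Measure Ω} {X Y : Ω → ℝ}

theorem integrable_max_sub_const [IsFiniteMeasure P] (hX : Integrable X P) (K : ℝ) :
    Integrable (fun ω => max (X ω - K) 0) P :=
  (hX.sub (integrable_const K)).pos_part

theorem integral_max_sub_const_mono [IsFiniteMeasure P]
    (hX : Integrable X P) (hY : Integrable Y P)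
    (hXY : ∀ᵐ ω ∂P, X ω ≤ Y ω) (K : ℝ) :
    ∫ ω, max (X ω - K) 0 ∂P ≤ ∫ ω, max (Y ω - K) 0 ∂P := by
  refine integral_mono_ae (integrable_max_sub_const hX K) (integrable_max_sub_const hY K) ?_
  filter_upwards [hXY] with ω h
  exact max_le_max (by linarith) le_rfl

theorem integral_max_sub_const_antitone [IsFiniteMeasure P]
    (hX : Integrable X P) {K K' : ℝ} (hK : K' ≤ K) :
    ∫ ω, max (X ω - K) 0 ∂P ≤ ∫ ω, max (X ω - K') 0 ∂P :=
  integral_mono (integrable_max_sub_const hX K) (integrable_max_sub_const hX K')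
    fun _ => max_le_max (by linarith) le_rfl

theorem integral_max_sub_const_le_add_integral_sub [IsFiniteMeasure P]
    (hX : Integrable X P) (hY : Integrable Y P)
    (hXY : ∀ᵐ ω ∂P, X ω ≤ Y ω) (K : ℝ) :
    ∫ ω, max (Y ω - K) 0 ∂P ≤ ∫ ω, max (X ω - K) 0 ∂P + ((∫ ω, Y ω ∂P) - ∫ ω, X ω ∂P) := by
  have hXK := integrable_max_sub_const hX K
  calc ∫ ω, max (Y ω - K) 0 ∂P ≤ ∫ ω, (max (X ω - K) 0 + (Y ω - X ω)) ∂P := by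
        refine integral_mono_ae (integrable_max_sub_const hY K) (hXK.add (hY.sub hX)) ?_
        filter_upwards [hXY] with ω h
        exact max_le (by linarith [le_max_left (X ω - K) 0])
          (by linarith [le_max_right (X ω - K) 0])
    _ = ∫ ω, max (X ω - K) 0 ∂P + ((∫ ω, Y ω ∂P) - ∫ ω, X ω ∂P) := by
        rw [integral_add (g := fun ω => Y ω - X ω) hXK (hY.sub hX), integral_sub hY hX]

theorem integral_max_sub_sub_const_le [IsProbabilityMeasure P] (hX : Integrable X P) (K : ℝ)
    {δ : ℝ} (hδ : 0 ≤ δ) :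
    ∫ ω, max (X ω - (K - δ)) 0 ∂P ≤ ∫ ω, max (X ω - K) 0 ∂P + δ := by
  have hXK := integrable_max_sub_const hX K
  calc ∫ ω, max (X ω - (K - δ)) 0 ∂P ≤ ∫ ω, (max (X ω - K) 0 + δ) ∂P :=
        integral_mono (integrable_max_sub_const hX (K - δ)) (hXK.add (integrable_const δ))
          fun ω => max_le (by linarith [le_max_left (X ω - K) 0])
            (by linarith [le_max_right (X ω - K) 0])
    _ = ∫ ω, max (X ω - K) 0 ∂P + δ := by
        rw [integral_add hXK (integrable_const δ), integral_const, probReal_univ, one_smul]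

end CallPayoff

theorem approximate_price_error_bound_general {Ω : Type*} [MeasurableSpace Ω] (P : Measure Ω)
    [IsProbabilityMeasure P] (G A : Ω → ℝ) (hG : Integrable G P) (hA : Integrable A P)
    (hle : ∀ᵐ ω ∂P, G ω ≤ A ω) (K r T : ℝ) :
    |Real.exp (-r * T) *
        (∫ ω, max (G ω - (K - ((∫ ω, A ω ∂P) - ∫ ω, G ω ∂P))) 0 ∂P) -
      Real.exp (-r * T) * ∫ ω, max (A ω - K) 0 ∂P| ≤
        Real.exp (-r * T) * ((∫ ω, A ω ∂P) - ∫ ω, G ω ∂P) := by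
  set δ := (∫ ω, A ω ∂P) - ∫ ω, G ω ∂P
  have hδ : 0 ≤ δ := sub_nonneg.mpr (integral_mono_ae hG hA hle)
  have upper := (integral_max_sub_sub_const_le hG K hδ).trans
    (add_le_add_left (integral_max_sub_const_mono hG hA hle K) δ)
  have lower := (integral_max_sub_const_le_add_integral_sub hG hA hle K).trans
    (add_le_add_left (integral_max_sub_const_antitone hG (sub_le_self K hδ)) δ)
  rw [← mul_sub, abs_mul, abs_of_pos (Real.exp_pos _)]
  exact mul_le_mul_of_nonneg_left (abs_sub_le_iff.mpr ⟨by linarith, by linarith⟩)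
    (Real.exp_pos _).le

/-- The approximation error of the adjusted-strike price satisfies
`|C̃ - C_A| ≤ e^{-rT}(E[A] - E[G])`. -/
theorem approximate_price_error_bound {Ω : Type*} [MeasurableSpace Ω] (P : Measure Ω)
    [IsProbabilityMeasure P] (G A : Ω → ℝ) (hG : Integrable G P) (hA : Integrable A P)
    (hle : ∀ᵐ ω ∂P, G ω ≤ A ω) (K r T : ℝ) (hr : 0 ≤ r) (hT : 0 ≤ T) :
    |Real.exp (-r * T) *
        (∫ ω, max (G ω - (K - ((∫ ω, A ω ∂P) - ∫ ω, G ω ∂P))) 0 ∂P) -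
      Real.exp (-r * T) * ∫ ω, max (A ω - K) 0 ∂P| ≤
        Real.exp (-r * T) * ((∫ ω, A ω ∂P) - ∫ ω, G ω ∂P) :=
  approximate_price_error_bound_general P G A hG hA hle K r T
end
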